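/- If γ ≠ 1 but all other Z-IL conditions hold (ε^l_{i,0} = 0 for l > 0, layer-l update at time t = l), then the PCN error at time t = l satisfies ε^l_{i,l} = γ^l · δ^l_i for all layers l, where δ^l_i are the BP error terms of the corresponding ANN with identical weights; consequently the Z-IL weight update equals γ^l times the BP weight update at layer l. -/

import Mathlib

/-!
Under Z-IL the error is a wave front travelling down from the output. At time `t` every layer
above `t` still holds its initial value, where the network is at equilibrium, so its prediction
error vanishes. The inference step at layer `t + 1` therefore sees only the error of layer `t`,
pulled back through `θ^{t+1}` and `f'`, and multiplies it by `γ`; inductively the error at the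
front is `γ^t` times the backpropagated error.
-/

/-- PCN prediction `μ^l_{i,t} = ∑_j θ^{l+1}_{i,j} f(x^{l+1}_{j,t})`. -/
noncomputable def mu (n : ℕ → ℕ) (θ : ℕ → ℕ → ℕ → ℝ) (f : ℝ → ℝ)
    (x : ℕ → ℕ → ℝ) (l i : ℕ) : ℝ :=
  ∑ j ∈ Finset.range (n (l + 1)), θ (l + 1) i j * f (x (l + 1) j)

open Finset

/-- The PCN error `ε^l_i` of a state `x`. -/
noncomputable def predictionError (n : ℕ → ℕ) (θ : ℕ → ℕ → ℕ → ℝ) (f : ℝ → ℝ)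
    (x : ℕ → ℕ → ℝ) (l i : ℕ) : ℝ :=
  x l i - mu n θ f x l i

noncomputable def inferenceStep (n : ℕ → ℕ) (θ : ℕ → ℕ → ℕ → ℝ) (f f' : ℝ → ℝ) (γ : ℝ)
    (x : ℕ → ℕ → ℝ) (l i : ℕ) : ℝ :=
  x l i + γ * (-predictionError n θ f x l i +
    f' (x l i) * ∑ k ∈ range (n (l - 1)), predictionError n θ f x (l - 1) k * θ l k i)

section

variable {L : ℕ} {n : ℕ → ℕ} {θ : ℕ → ℕ → ℕ → ℝ} {f f' : ℝ → ℝ} {γ : ℝ}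
  {X : ℕ → ℕ → ℕ → ℝ}

theorem mu_congr {x y : ℕ → ℕ → ℝ} {l : ℕ} (h : ∀ j, x (l + 1) j = y (l + 1) j) (i : ℕ) :
    mu n θ f x l i = mu n θ f y l i :=
  sum_congr rfl fun j _ => by rw [h j]

theorem predictionError_congr {x y : ℕ → ℕ → ℝ} {l i : ℕ} (hl : x l i = y l i)
    (hsucc : ∀ j, x (l + 1) j = y (l + 1) j) :
    predictionError n θ f x l i = predictionError n θ f y l i := by
  rw [predictionError, predictionError, hl, mu_congr hsucc]

theorem predictionError_eq_zero_of_frozen {t : ℕ}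
    (hinit : ∀ l, 1 ≤ l → l ≤ L - 1 → ∀ i, predictionError n θ f (X 0) l i = 0)
    (hfrozen : ∀ l, t < l → l ≤ L → ∀ i, X t l i = X 0 l i) :
    ∀ l, t < l → l ≤ L - 1 → ∀ i, predictionError n θ f (X t) l i = 0 := by
  intro l htl hlL i
  rw [predictionError_congr (hfrozen l htl (by omega) i) (hfrozen (l + 1) (by omega) (by omega)),
    hinit l (by omega) hlL i]

theorem state_eq_init_of_lt (hclamp : ∀ t i, X t L i = X 0 L i)
    (hdyn : ∀ t, ∀ l, 0 < l → l < L → ∀ i, X (t + 1) l i = inferenceStep n θ f f' γ (X t) l i)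
    (hinit : ∀ l, 1 ≤ l → l ≤ L - 1 → ∀ i, predictionError n θ f (X 0) l i = 0) :
    ∀ t l, t < l → l ≤ L → ∀ i, X t l i = X 0 l i := by
  intro t
  induction t with
  | zero => exact fun _ _ _ _ => rfl
  | succ t ih =>
    intro l htl hlL i
    obtain rfl | hlt := eq_or_lt_of_le hlL
    · exact hclamp (t + 1) i
    have hzero := predictionError_eq_zero_of_frozen hinit ih
    have hsum : ∑ k ∈ range (n (l - 1)), predictionError n θ f (X t) (l - 1) k * θ l k i = 0 :=
      sum_eq_zero fun k _ => by rw [hzero (l - 1) (by omega) (by omega) k, zero_mul]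
    rw [hdyn t l (by omega) hlt i, inferenceStep, hzero l (by omega) (by omega) i, hsum,
      ih l (by omega) hlL i]
    ring

theorem predictionError_diag_eq_pow_mul {δ : ℕ → ℕ → ℝ} (hclamp : ∀ t i, X t L i = X 0 L i)
    (hdyn : ∀ t, ∀ l, 0 < l → l < L → ∀ i, X (t + 1) l i = inferenceStep n θ f f' γ (X t) l i)
    (hinit : ∀ l, 1 ≤ l → l ≤ L - 1 → ∀ i, predictionError n θ f (X 0) l i = 0)
    (hδ0 : ∀ i, δ 0 i = predictionError n θ f (X 0) 0 i)
    (hδS : ∀ l, 0 < l → l < L → ∀ i,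
      δ l i = f' (mu n θ f (X 0) l i) * ∑ k ∈ range (n (l - 1)), δ (l - 1) k * θ l k i) :
    ∀ t ≤ L - 1, ∀ i, predictionError n θ f (X t) t i = γ ^ t * δ t i := by
  have hfrozen := state_eq_init_of_lt hclamp hdyn hinit
  intro t
  induction t with
  | zero => exact fun _ i => by rw [hδ0, pow_zero, one_mul]
  | succ t ih =>
    intro htL i
    have hfront : X t (t + 1) i = mu n θ f (X 0) (t + 1) i := by
      rw [hfrozen t (t + 1) (by omega) (by omega) i, ← sub_eq_zero]
      exact hinit (t + 1) (by omega) htL i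
    have hmu : mu n θ f (X (t + 1)) (t + 1) i = mu n θ f (X 0) (t + 1) i :=
      mu_congr (hfrozen (t + 1) (t + 2) (by omega) (by omega)) i
    have hsum : ∑ k ∈ range (n t), predictionError n θ f (X t) t k * θ (t + 1) k i
        = γ ^ t * ∑ k ∈ range (n t), δ t k * θ (t + 1) k i := by
      rw [mul_sum]
      exact sum_congr rfl fun k _ => by rw [ih (by omega) k, mul_assoc]
    have hstep := hdyn t (t + 1) t.succ_pos (by omega) i
    rw [inferenceStep, Nat.add_sub_cancel, predictionError_eq_zero_of_frozen hinit (hfrozen t) (t + 1)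
      (by omega) htL i, hsum, hfront] at hstep
    rw [predictionError, hstep, hmu, hδS (t + 1) t.succ_pos (by omega) i, Nat.add_sub_cancel]
    ring

end

theorem zil_gamma_scaling_general
    (L : ℕ) (n : ℕ → ℕ) (θ : ℕ → ℕ → ℕ → ℝ) (f : ℝ → ℝ)
    (sIn sOut : ℕ → ℝ) (α γ : ℝ) (X : ℕ → ℕ → ℕ → ℝ)
    (hclampIn : ∀ t i, X t L i = sIn i)
    (hclampOut : ∀ t i, X t 0 i = sOut i)
    (hdyn : ∀ t, ∀ l, 0 < l → l < L → ∀ i,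
      X (t + 1) l i = X t l i + γ *
        (-(X t l i - mu n θ f (X t) l i) +
          deriv f (X t l i) *
            ∑ k ∈ Finset.range (n (l - 1)),
              (X t (l - 1) k - mu n θ f (X t) (l - 1) k) * θ l k i))
    (hinit : ∀ l, 1 ≤ l → l ≤ L - 1 → ∀ i, X 0 l i = mu n θ f (X 0) l i)
    (δ : ℕ → ℕ → ℝ)
    (hδ0 : ∀ i, δ 0 i = sOut i - mu n θ f (X 0) 0 i)
    (hδS : ∀ l, 0 < l → l < L → ∀ i,
      δ l i = deriv f (mu n θ f (X 0) l i) *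
        ∑ k ∈ Finset.range (n (l - 1)), δ (l - 1) k * θ l k i) :
    ∀ l ≤ L - 1, ∀ i,
      (X l l i - mu n θ f (X l) l i = γ ^ l * δ l i) ∧
      ∀ j, α * (X l l i - mu n θ f (X l) l i) * f (X l (l + 1) j)
             = γ ^ l * (α * δ l i * f (X 0 (l + 1) j)) := by
  have hclamp : ∀ t i, X t L i = X 0 L i := fun t i => by rw [hclampIn, hclampIn]
  have hinit' : ∀ l, 1 ≤ l → l ≤ L - 1 → ∀ i, predictionError n θ f (X 0) l i = 0 :=
    fun l h1 h2 i => sub_eq_zero.mpr (hinit l h1 h2 i)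
  have hδ0' : ∀ i, δ 0 i = predictionError n θ f (X 0) 0 i := fun i => by
    rw [hδ0, ← hclampOut 0 i, predictionError]
  intro l hl i
  have hε : X l l i - mu n θ f (X l) l i = γ ^ l * δ l i :=
    predictionError_diag_eq_pow_mul hclamp hdyn hinit' hδ0' hδS l hl i
  refine ⟨hε, fun j => ?_⟩
  have hX : X l (l + 1) j = X 0 (l + 1) j := by
    rcases Nat.eq_zero_or_pos l with rfl | hl0
    · rfl
    · exact state_eq_init_of_lt hclamp hdyn hinit' l (l + 1) (by omega) (by omega) j
  rw [hε, hX]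
  ring

/-- if `γ ≠ 1` but all other Z-IL conditions hold, then
`ε^l_{i,l} = γ^l · δ^l_i` for every layer `l`, where `δ` are the BP error terms of
the corresponding ANN with identical weights (`w = θ`, `y^l_i = μ^l_{i,0}`,
`y^{l_max} = s^in = x^{l_max}_{·,0}`); consequently the Z-IL weight update
`α ε^l_{i,l} f(x^{l+1}_{j,l})` equals `γ^l` times the BP update `α δ^l_i f(y^{l+1}_j)`. -/
theorem zil_gamma_scaling
    (L : ℕ) (n : ℕ → ℕ) (θ : ℕ → ℕ → ℕ → ℝ) (f : ℝ → ℝ) (hf : Differentiable ℝ f)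
    (sIn sOut : ℕ → ℝ) (α γ : ℝ) (hγ : γ ≠ 1) (X : ℕ → ℕ → ℕ → ℝ)
    (hclampIn : ∀ t i, X t L i = sIn i)
    (hclampOut : ∀ t i, X t 0 i = sOut i)
    (hdyn : ∀ t, ∀ l, 0 < l → l < L → ∀ i,
      X (t + 1) l i = X t l i + γ *
        (-(X t l i - mu n θ f (X t) l i) +
          deriv f (X t l i) *
            ∑ k ∈ Finset.range (n (l - 1)),
              (X t (l - 1) k - mu n θ f (X t) (l - 1) k) * θ l k i))
    (hinit : ∀ l, 1 ≤ l → l ≤ L - 1 → ∀ i, X 0 l i = mu n θ f (X 0) l i)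
    (δ : ℕ → ℕ → ℝ)
    (hδ0 : ∀ i, δ 0 i = sOut i - mu n θ f (X 0) 0 i)
    (hδS : ∀ l, 0 < l → l < L → ∀ i,
      δ l i = deriv f (mu n θ f (X 0) l i) *
        ∑ k ∈ Finset.range (n (l - 1)), δ (l - 1) k * θ l k i) :
    ∀ l ≤ L - 1, ∀ i,
      (X l l i - mu n θ f (X l) l i = γ ^ l * δ l i) ∧
      ∀ j, α * (X l l i - mu n θ f (X l) l i) * f (X l (l + 1) j)
             = γ ^ l * (α * δ l i * f (X 0 (l + 1) j)) :=
  zil_gamma_scaling_general L n θ f sIn sOut α γ X hclampIn hclampOut hdyn hinit δ hδ0 hδS
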